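/- Volume and doubling estimates for anisotropic balls on the cosphere bundle: let n ≥ 2. There exists a constant C = C(n) > 0 such that for all λ ≥ 1, τ > 0 and (x,ω) ∈ ℝⁿ×S^{n−1}: (1/C) λⁿ |B_τ(x,ω)| ≤ |B_{λτ}(x,ω)| ≤ C λ^{2n} |B_τ(x,ω)|. Moreover, (1/C) τ^{2n} ≤ |B_τ(x,ω)| ≤ C τ^{2n} for 0 < τ ≤ 1, and (1/C) τⁿ ≤ |B_τ(x,ω)| ≤ C τⁿ for τ ≥ 1. -/

import Mathlib

open MeasureTheory Real
open scoped ENNReal NNReal Classical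

noncomputable section

abbrev En (n : ℕ) : Type := EuclideanSpace ℝ (Fin n)

/-- The first standard basis vector of ℝⁿ. -/
def e1 (n : ℕ) : En n := if h : 0 < n then EuclideanSpace.single (⟨0, h⟩ : Fin n) (1 : ℝ) else 0

/-- Surface measure on the unit sphere `S^{n-1}`: the `(n-1)`-dimensional Hausdorff measure
restricted to the unit sphere of ℝⁿ. -/
def μSph (n : ℕ) : Measure (En n) := (μH[(n : ℝ) - 1]).restrict (Metric.sphere (0 : En n) 1)

/-- Measure on the cosphere bundle ℝⁿ × S^{n-1}. -/
def μSp (n : ℕ) : Measure (En n × En n) := (volume : Measure (En n)).prod (μSph n)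

/-- Anisotropic ball `B_τ(x,ω)` on the cosphere bundle. -/
def Ball (n : ℕ) (x ω : En n) (τ : ℝ) : Set (En n × En n) :=
  {p : En n × En n | ‖x - p.1‖ ^ 2 + |(inner ℝ ω (x - p.1) : ℝ)| + ‖ω - p.2‖ ^ 2 ≤ τ ^ 2}

/-- The normalizing constant `c_σ`. -/
def cNorm (n : ℕ) (φ : En n → ℝ) (σ : ℝ) : ℝ :=
  (∫ ν, (φ ((Real.sqrt σ)⁻¹ • (e1 n - ν))) ^ 2 ∂μSph n) ^ (-(1 : ℝ) / 2)

/-- `φ_{ω,σ}`. -/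
def phiOS (n : ℕ) (φ : En n → ℝ) (ω : En n) (σ : ℝ) (ζ : En n) : ℝ :=
  if ζ = 0 then 0 else cNorm n φ σ * φ ((Real.sqrt σ)⁻¹ • (‖ζ‖⁻¹ • ζ - ω))

/-- `Ψ_σ`. -/
def PsiS (n : ℕ) (Ψ : En n → ℝ) (σ : ℝ) (ζ : En n) : ℝ := Ψ (σ • ζ)

/-- `ψ_{ω,σ} = Ψ_σ φ_{ω,σ}`. -/
def psiOS (n : ℕ) (φ Ψ : En n → ℝ) (ω : En n) (σ : ℝ) (ζ : En n) : ℝ :=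
  PsiS n Ψ σ ζ * phiOS n φ ω σ ζ

/-- `φ_ω(ζ) = ∫₀⁴ ψ_{ω,τ}(ζ) dτ/τ`. -/
def phiO (n : ℕ) (φ Ψ : En n → ℝ) (ω ζ : En n) : ℝ :=
  ∫ τ in Set.Ioo (0 : ℝ) 4, psiOS n φ Ψ ω τ ζ * τ⁻¹

/-- `θ_{ω,σ} = Ψ_σ φ_ω`. -/
def theta (n : ℕ) (φ Ψ : En n → ℝ) (ω : En n) (σ : ℝ) (ζ : En n) : ℝ :=
  PsiS n Ψ σ ζ * phiO n φ Ψ ω ζ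

/-- The angular average `∫_{S^{n-1}} φ_ν(ζ)² dν`. -/
def angAvg (n : ℕ) (φ Ψ : En n → ℝ) (ζ : En n) : ℝ := ∫ ν, (phiO n φ Ψ ν ζ) ^ 2 ∂μSph n

/-- `χ_{ω,σ} = (∫ φ_ν² dν)⁻¹ θ_{ω,σ}` on `supp θ_{ω,σ}`, and `0` elsewhere. -/
def chi (n : ℕ) (φ Ψ : En n → ℝ) (ω : En n) (σ : ℝ) (ζ : En n) : ℝ :=
  if ζ ∈ tsupport (theta n φ Ψ ω σ) then (angAvg n φ Ψ ζ)⁻¹ * theta n φ Ψ ω σ ζ else 0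

/-- Fourier transform, convention `𝓕f(ξ) = ∫ e^{-ix·ξ} f(x) dx`. -/
def FT (n : ℕ) (f : En n → ℂ) (ξ : En n) : ℂ :=
  ∫ x, Complex.exp (-(Complex.I * ((inner ℝ x ξ : ℝ) : ℂ))) * f x

/-- Inverse Fourier transform. -/
def FTinv (n : ℕ) (g : En n → ℂ) (x : En n) : ℂ :=
  ((2 * Real.pi : ℝ) : ℂ) ^ (-(n : ℤ)) * ∫ ξ, Complex.exp (Complex.I * ((inner ℝ x ξ : ℝ) : ℂ)) * g ξ

/-- Fourier multiplier `m(D)f = 𝓕⁻¹(m 𝓕 f)`. -/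
def mulD (n : ℕ) (m : En n → ℂ) (f : En n → ℂ) : En n → ℂ :=
  FTinv n fun ζ => m ζ * FT n f ζ

/-- Fourier multiplier with a real symbol. -/
def mulDR (n : ℕ) (m : En n → ℝ) (f : En n → ℂ) : En n → ℂ :=
  mulD n (fun ζ => (m ζ : ℂ)) f

/-- Conical square function `Sf(x,ω)`. -/
def Sfun (n : ℕ) (φ Ψ : En n → ℝ) (f : En n → ℂ) (z : En n × En n) : ℝ :=
  Real.sqrt (∫ σ in Set.Ioo (0 : ℝ) 1,
    (⨍ p in Ball n z.1 z.2 (Real.sqrt σ), ‖mulDR n (theta n φ Ψ p.2 σ) f p.1‖ ^ 2 ∂μSp n) * σ⁻¹)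

/-- `L^p(ℝⁿ)` norm. -/
def LpN (n : ℕ) (p : ℝ) (g : En n → ℂ) : ℝ := (∫ x, ‖g x‖ ^ p) ^ (1 / p)

/-- The (equivalent) `H^p_FIO` norm `N_p(f) = ‖q(D)f‖_p + ‖Sf‖_{L^p(S^*ℝⁿ)}`. -/
def Np (n : ℕ) (φ Ψ q : En n → ℝ) (p : ℝ) (f : En n → ℂ) : ℝ :=
  LpN n p (mulDR n q f) + (∫ z, Sfun n φ Ψ f z ^ p ∂μSp n) ^ (1 / p)

/-- The high-frequency remainder symbol `r`. -/
def rSym (n : ℕ) (Ψ : En n → ℝ) (ζ : En n) : ℝ :=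
  if ζ = 0 then 1 else Real.sqrt (∫ σ in Set.Ioi (1 : ℝ), (Ψ (σ • ζ)) ^ 2 * σ⁻¹)

/-- The low-frequency symbol `s`. -/
def sSym (n : ℕ) (φ Ψ : En n → ℝ) (ζ : En n) : ℝ :=
  1 - ∫ σ in Set.Ioo (0 : ℝ) 1, (∫ ω, theta n φ Ψ ω σ ζ * chi n φ Ψ ω σ ζ ∂μSph n) * σ⁻¹

/-- Total surface measure `|S^{n-1}|`. -/
def sphVol (n : ℕ) : ℝ := (μSph n Set.univ).toReal

/-- The wave packet transform `W`. -/
def Wt (n : ℕ) (φ Ψ : En n → ℝ) (f : En n → ℂ) (y ν : En n) (σ : ℝ) : ℂ :=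
  if σ < 1 then mulDR n (psiOS n φ Ψ ν σ) f y
  else if σ ≤ Real.exp 1 then ((sphVol n ^ (-(1 : ℝ) / 2) : ℝ) : ℂ) * mulDR n (rSym n Ψ) f y
  else 0

/-- The wave packet transform `V`. -/
def Vt (n : ℕ) (φ Ψ : En n → ℝ) (f : En n → ℂ) (y ν : En n) (σ : ℝ) : ℂ :=
  if σ < 1 then mulDR n (theta n φ Ψ ν σ) f y
  else if σ ≤ Real.exp 1 then ((sphVol n ^ (-(1 : ℝ) / 2) : ℝ) : ℂ) * mulDR n (sSym n φ Ψ) f y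
  else 0

/-- Tent-space square function of `W f`. -/
def AW (n : ℕ) (φ Ψ : En n → ℝ) (f : En n → ℂ) (z : En n × En n) : ℝ :=
  Real.sqrt (∫ σ in Set.Ioi (0 : ℝ),
    (⨍ p in Ball n z.1 z.2 (Real.sqrt σ), ‖Wt n φ Ψ f p.1 p.2 σ‖ ^ 2 ∂μSp n) * σ⁻¹)

/-- Tent-space square function of `V f`. -/
def AV (n : ℕ) (φ Ψ : En n → ℝ) (f : En n → ℂ) (z : En n × En n) : ℝ :=
  Real.sqrt (∫ σ in Set.Ioi (0 : ℝ),
    (⨍ p in Ball n z.1 z.2 (Real.sqrt σ), ‖Vt n φ Ψ f p.1 p.2 σ‖ ^ 2 ∂μSp n) * σ⁻¹)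

/-- The list of directions encoding the mixed derivative `⟨ω,∇⟩^β ∂^α`. -/
def dirList (n : ℕ) (α : Fin n → ℕ) (β : ℕ) (ω : En n) : List (En n) :=
  List.replicate β ω ++
    (List.ofFn fun i : Fin n => List.replicate (α i) (EuclideanSpace.single i (1 : ℝ))).flatten

lemma isClosed_Ball (n : ℕ) (x ω : En n) (τ : ℝ) : IsClosed (Ball n x ω τ) := by
  have h : Continuous fun p : En n × En n =>
      ‖x - p.1‖ ^ 2 + |(inner ℝ ω (x - p.1) : ℝ)| + ‖ω - p.2‖ ^ 2 := by
    apply Continuous.add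
    apply Continuous.add
    · exact ((continuous_const.sub continuous_fst).norm.pow 2)
    · exact ((continuous_const.inner (continuous_const.sub continuous_fst))).abs
    · exact ((continuous_const.sub continuous_snd).norm.pow 2)
  exact isClosed_le h continuous_const

lemma measurableSet_Ball (n : ℕ) (x ω : En n) (τ : ℝ) : MeasurableSet (Ball n x ω τ) :=
  (isClosed_Ball n x ω τ).measurableSet

lemma norm_sq_eq {n : ℕ} (x : En n) : ‖x‖^2 = ∑ i, x i^2 := by
  rw [EuclideanSpace.norm_eq, Real.sq_sqrt (by positivity)]
  simp [sq_abs]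

lemma coord_abs_le_norm {n : ℕ} (x : En n) (i : Fin n) : |x i| ≤ ‖x‖ := by
  have h1 : x i ^ 2 ≤ ‖x‖^2 := by
    rw [norm_sq_eq]
    exact Finset.single_le_sum (f := fun j => x j ^2) (fun j _ => sq_nonneg _) (Finset.mem_univ i)
  nlinarith [abs_nonneg (x i), norm_nonneg x, sq_abs (x i)]

lemma le_of_sq_le_sq' {a b : ℝ} (ha : 0 ≤ b) (h : a^2 ≤ b^2) (ha' : 0 ≤ a) : a ≤ b := by
  nlinarith

/-- The graph map parametrizing a piece of the sphere. -/
def gmap (m : ℕ) (i : Fin (m+2)) (ε : ℝ) (z : Fin (m+1) → ℝ) : En (m+2) :=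
  WithLp.toLp 2 (i.insertNth (ε * Real.sqrt (1 - ∑ j, z j ^ 2)) z)

/-- The parameter domain. -/
def gdom (m : ℕ) : Set (Fin (m+1) → ℝ) := {z | ∑ j, z j ^ 2 ≤ 1 - (4*(m+2) : ℝ)⁻¹}

lemma gmap_apply_same (m : ℕ) (i : Fin (m+2)) (ε : ℝ) (z : Fin (m+1) → ℝ) :
    gmap m i ε z i = ε * Real.sqrt (1 - ∑ j, z j ^ 2) := by
  simp [gmap]

lemma gmap_apply_succAbove (m : ℕ) (i : Fin (m+2)) (ε : ℝ) (z : Fin (m+1) → ℝ) (j : Fin (m+1)) :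
    gmap m i ε z (i.succAbove j) = z j := by
  simp [gmap]

lemma sqrt_sub_sqrt_sq_le (m : ℕ) {a b : ℝ} (ha0 : 0 ≤ a) (hb0 : 0 ≤ b)
    (ha : a ≤ 1 - (4*(m+2) : ℝ)⁻¹) (hb : b ≤ 1 - (4*(m+2) : ℝ)⁻¹) :
    (Real.sqrt (1-a) - Real.sqrt (1-b))^2 ≤ (m+2) * (b - a)^2 := by
  set n : ℝ := (m+2 : ℝ) with hn
  have hnpos : (0:ℝ) < n := by positivity
  have hi : (0:ℝ) < (4*n)⁻¹ := by positivity
  have h4 : (0:ℝ) < 4*n := by positivity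
  have hinv : (4*n)⁻¹ ≤ 1 - a := by linarith
  have hinv' : (4*n)⁻¹ ≤ 1 - b := by linarith
  have hsa : Real.sqrt ((4*n)⁻¹) ≤ Real.sqrt (1-a) := Real.sqrt_le_sqrt hinv
  have hsb : Real.sqrt ((4*n)⁻¹) ≤ Real.sqrt (1-b) := Real.sqrt_le_sqrt hinv'
  have hs4 : Real.sqrt ((4*n)⁻¹) = (2*Real.sqrt n)⁻¹ := by
    rw [Real.sqrt_inv, show (4:ℝ)*n = 2^2*n by ring, Real.sqrt_mul (by positivity),
      Real.sqrt_sq (by norm_num)]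
  have hsn : (0:ℝ) < Real.sqrt n := Real.sqrt_pos.mpr hnpos
  have hkey : (Real.sqrt (1-a) - Real.sqrt (1-b)) * (Real.sqrt (1-a) + Real.sqrt (1-b)) = b - a := by
    have h1 : Real.sqrt (1-a) ^2 = 1 - a := Real.sq_sqrt (by linarith)
    have h2 : Real.sqrt (1-b) ^2 = 1 - b := Real.sq_sqrt (by linarith)
    nlinarith [h1, h2]
  have hsum : (Real.sqrt n)⁻¹ ≤ Real.sqrt (1-a) + Real.sqrt (1-b) := by
    have := hs4 ▸ hsa
    have := hs4 ▸ hsb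
    have : (2*Real.sqrt n)⁻¹ + (2*Real.sqrt n)⁻¹ ≤ Real.sqrt (1-a) + Real.sqrt (1-b) := by
      linarith
    calc (Real.sqrt n)⁻¹ = (2*Real.sqrt n)⁻¹ + (2*Real.sqrt n)⁻¹ := by
          field_simp; ring
      _ ≤ _ := this
  -- (diff)^2 * (1/√n)^2 ≤ (diff)^2 * (sum)^2 = (b-a)^2
  have hd2 : (Real.sqrt (1-a) - Real.sqrt (1-b))^2 * ((Real.sqrt n)⁻¹)^2 ≤ (b-a)^2 := by
    have h0 : (0:ℝ) ≤ (Real.sqrt (1-a) + Real.sqrt (1-b)) := by positivity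
    calc (Real.sqrt (1-a) - Real.sqrt (1-b))^2 * ((Real.sqrt n)⁻¹)^2
        ≤ (Real.sqrt (1-a) - Real.sqrt (1-b))^2 * (Real.sqrt (1-a) + Real.sqrt (1-b))^2 := by
          apply mul_le_mul_of_nonneg_left _ (sq_nonneg _)
          apply pow_le_pow_left₀ (by positivity) hsum
      _ = (b-a)^2 := by rw [← mul_pow, hkey]
  have hninv : ((Real.sqrt n)⁻¹)^2 = n⁻¹ := by
    rw [← Real.sqrt_inv]; exact Real.sq_sqrt (by positivity)
  rw [hninv] at hd2
  have : (Real.sqrt (1-a) - Real.sqrt (1-b))^2 * n⁻¹ * n ≤ (b-a)^2 * n := by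
    exact mul_le_mul_of_nonneg_right hd2 (le_of_lt hnpos)
  calc (Real.sqrt (1-a) - Real.sqrt (1-b))^2
      = (Real.sqrt (1-a) - Real.sqrt (1-b))^2 * n⁻¹ * n := by field_simp
    _ ≤ (b-a)^2 * n := this
    _ = n * (b-a)^2 := by ring

set_option maxHeartbeats 1000000 in
lemma gmap_lipschitz (m : ℕ) (i : Fin (m+2)) (ε : ℝ) (hε : |ε| = 1) :
    LipschitzOnWith (3*(m+2)^2 : ℝ≥0) (gmap m i ε) (gdom m) := by
  apply LipschitzOnWith.of_dist_le_mul
  intro z hz w hw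
  set n : ℝ := (m+2 : ℝ) with hn
  have hnpos : (0:ℝ) < n := by positivity
  set D := dist z w with hD
  have hD0 : 0 ≤ D := dist_nonneg
  have hcoord : ∀ j, |z j - w j| ≤ D := by
    intro j
    have := dist_le_pi_dist z w j
    rwa [Real.dist_eq] at this
  set a := ∑ j, z j ^ 2 with hadef
  set b := ∑ j, w j ^ 2 with hbdef
  have ha0 : 0 ≤ a := by positivity
  have hb0 : 0 ≤ b := by positivity
  have ha : a ≤ 1 - (4*n)⁻¹ := hz
  have hb : b ≤ 1 - (4*n)⁻¹ := hw
  have hz1 : ∀ j, |z j| ≤ 1 := by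
    intro j
    have h1 : z j ^2 ≤ a :=
      Finset.single_le_sum (f := fun j => z j ^2) (fun j _ => sq_nonneg _) (Finset.mem_univ j)
    have h2 : (0:ℝ) < (4*n)⁻¹ := by positivity
    nlinarith [sq_abs (z j), abs_nonneg (z j)]
  have hw1 : ∀ j, |w j| ≤ 1 := by
    intro j
    have h1 : w j ^2 ≤ b :=
      Finset.single_le_sum (f := fun j => w j ^2) (fun j _ => sq_nonneg _) (Finset.mem_univ j)
    have h2 : (0:ℝ) < (4*n)⁻¹ := by positivity
    nlinarith [sq_abs (w j), abs_nonneg (w j)]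
  -- |b - a| ≤ 2 (m+1) D
  have hab : |b - a| ≤ 2*(m+1)*D := by
    rw [hbdef, hadef, ← Finset.sum_sub_distrib]
    calc |∑ j, (w j ^2 - z j ^2)| ≤ ∑ j, |w j ^2 - z j ^2| := Finset.abs_sum_le_sum_abs _ _
      _ ≤ ∑ _j : Fin (m+1), 2*D := by
          apply Finset.sum_le_sum
          intro j _
          have h1 : w j ^2 - z j ^2 = (w j - z j) * (w j + z j) := by ring
          rw [h1, abs_mul]
          have h2 : |w j - z j| ≤ D := by rw [abs_sub_comm]; exact hcoord j
          have h3 : |w j + z j| ≤ 2 := by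
            calc |w j + z j| ≤ |w j| + |z j| := abs_add_le _ _
              _ ≤ 2 := by linarith [hz1 j, hw1 j]
          calc |w j - z j| * |w j + z j| ≤ D * 2 :=
                mul_le_mul h2 h3 (abs_nonneg _) hD0
            _ = 2*D := by ring
      _ = 2*(m+1)*D := by
          simp only [Finset.sum_const, Finset.card_univ, Fintype.card_fin, nsmul_eq_mul]
          push_cast; ring
  -- square of the norm of the difference
  have hdist : dist (gmap m i ε z) (gmap m i ε w) = ‖gmap m i ε z - gmap m i ε w‖ :=
    dist_eq_norm _ _
  have hnormsq : ‖gmap m i ε z - gmap m i ε w‖^2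
      = (ε * Real.sqrt (1-a) - ε * Real.sqrt (1-b))^2 + ∑ j, (z j - w j)^2 := by
    rw [norm_sq_eq]
    rw [Fin.sum_univ_succAbove (fun k => ((gmap m i ε z - gmap m i ε w) k)^2) i]
    congr 1
    · rw [PiLp.sub_apply, gmap_apply_same, gmap_apply_same]
    · apply Finset.sum_congr rfl
      intro j _
      rw [PiLp.sub_apply, gmap_apply_succAbove, gmap_apply_succAbove]
  have hterm1 : (ε * Real.sqrt (1-a) - ε * Real.sqrt (1-b))^2 ≤ n * (b-a)^2 := by
    have h1 : (ε * Real.sqrt (1-a) - ε * Real.sqrt (1-b))^2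
        = ε^2 * (Real.sqrt (1-a) - Real.sqrt (1-b))^2 := by ring
    have h2 : ε^2 = 1 := by rw [← sq_abs, hε]; norm_num
    rw [h1, h2, one_mul]
    exact sqrt_sub_sqrt_sq_le m ha0 hb0 ha hb
  have hterm2 : ∑ j, (z j - w j)^2 ≤ (m+1) * D^2 := by
    calc ∑ j, (z j - w j)^2 ≤ ∑ _j : Fin (m+1), D^2 := by
          apply Finset.sum_le_sum
          intro j _
          calc (z j - w j)^2 = |z j - w j|^2 := (sq_abs _).symm
            _ ≤ D^2 := pow_le_pow_left₀ (abs_nonneg _) (hcoord j) 2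
      _ = (m+1) * D^2 := by
          simp only [Finset.sum_const, Finset.card_univ, Fintype.card_fin, nsmul_eq_mul]
          push_cast; ring
  have habsq : (b-a)^2 ≤ (2*(m+1)*D)^2 := by
    nlinarith [sq_abs (b-a), abs_nonneg (b-a)]
  have hm1 : (m+1 : ℝ) ≤ n := by rw [hn]; push_cast; linarith
  have hn1 : (1:ℝ) ≤ n := by rw [hn]; push_cast; linarith
  have hfinal : ‖gmap m i ε z - gmap m i ε w‖^2 ≤ ((3*n^2) * D)^2 := by
    rw [hnormsq]
    have hq1 : (2*(m+1)*D) ≤ (2*n*D) := by nlinarith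
    have hq2 : (2*(m+1)*D)^2 ≤ (2*n*D)^2 :=
      pow_le_pow_left₀ (by positivity) hq1 2
    have h1 : n * (b-a)^2 ≤ n * (2*n*D)^2 :=
      mul_le_mul_of_nonneg_left (le_trans habsq hq2) (le_of_lt hnpos)
    have h2 : ∑ j, (z j - w j)^2 ≤ n * D^2 := by nlinarith [sq_nonneg D]
    have h3 : n * (2*n*D)^2 + n * D^2 ≤ ((3*n^2)*D)^2 := by nlinarith [sq_nonneg D]
    linarith [hterm1, h2]
  have hKD : ‖gmap m i ε z - gmap m i ε w‖ ≤ 3*n^2 * D :=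
    le_of_sq_le_sq' (by positivity) hfinal (norm_nonneg _)
  rw [hdist]
  calc ‖gmap m i ε z - gmap m i ε w‖ ≤ 3*n^2 * D := hKD
    _ = ((3*(m+2)^2 : ℝ≥0) : ℝ) * dist z w := by rw [hn, hD]; push_cast; ring

lemma hausdorff_eq_volume_pi (m : ℕ) :
    (μH[((m+1:ℕ) : ℝ)] : Measure (Fin (m+1) → ℝ)) = volume := by
  have := MeasureTheory.hausdorffMeasure_pi_real (ι := Fin (m+1))
  simpa [Fintype.card_fin] using this

lemma sphere_subset_cover (m : ℕ) : Metric.sphere (0 : En (m+2)) 1 ⊆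
    ⋃ i : Fin (m+2), (gmap m i 1 '' gdom m ∪ gmap m i (-1) '' gdom m) := by
  intro ν hν
  have hν1 : ‖ν‖ = 1 := by simpa using mem_sphere_zero_iff_norm.mp hν
  have hsum : ∑ k, ν k ^ 2 = 1 := by rw [← norm_sq_eq, hν1]; norm_num
  obtain ⟨i, _, hi⟩ := Finset.exists_max_image Finset.univ (fun k => ν k ^ 2)
    ⟨0, Finset.mem_univ 0⟩
  have hcard : (1:ℝ) ≤ (m+2) * ν i ^2 := by
    have h1 : ∑ k, ν k ^2 ≤ ∑ _k : Fin (m+2), ν i ^2 :=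
      Finset.sum_le_sum (fun k _ => hi k (Finset.mem_univ k))
    rw [hsum] at h1
    simpa [Finset.sum_const, Finset.card_univ, Fintype.card_fin, nsmul_eq_mul] using h1
  have hn2 : (0:ℝ) < (m+2:ℝ) := by positivity
  set z := i.removeNth ν with hzdef
  have hzsum : ∑ j, z j ^ 2 = 1 - ν i ^2 := by
    have := Fin.sum_univ_succAbove (fun k => ν k ^2) i
    rw [hsum] at this
    have : 1 = ν i ^2 + ∑ j, z j ^2 := this
    linarith
  have hzdom : z ∈ gdom m := by
    simp only [gdom, Set.mem_setOf_eq, hzsum]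
    have : (4*(m+2):ℝ)⁻¹ ≤ ν i ^2 := by
      rw [inv_le_iff_one_le_mul₀ (by positivity)]
      nlinarith
    linarith
  set ε : ℝ := if 0 ≤ ν i then 1 else -1 with hε
  have hval : ε * Real.sqrt (1 - ∑ j, z j ^2) = ν i := by
    rw [hzsum]
    have : (1 : ℝ) - (1 - ν i ^2) = ν i ^2 := by ring
    rw [this, Real.sqrt_sq_eq_abs]
    rcases le_or_gt 0 (ν i) with h | h
    · rw [hε, if_pos h, one_mul, abs_of_nonneg h]
    · rw [hε, if_neg (not_le.mpr h), abs_of_neg h]; ring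
  have hgm : gmap m i ε z = ν := by
    unfold gmap
    rw [hval, hzdef]
    exact congrArg (WithLp.toLp 2) (Fin.insertNth_self_removeNth i ν)
  apply Set.mem_iUnion.mpr ⟨i, ?_⟩
  rcases le_or_gt 0 (ν i) with h | h
  · left
    exact ⟨z, hzdom, by rw [← hgm, hε, if_pos h]⟩
  · right
    exact ⟨z, hzdom, by rw [← hgm, hε, if_neg (not_le.mpr h)]⟩

lemma gdom_subset_ball (m : ℕ) : gdom m ⊆ Metric.closedBall (0 : Fin (m+1) → ℝ) 1 := by
  intro z hz
  rw [Metric.mem_closedBall, dist_zero_right]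
  rw [pi_norm_le_iff_of_nonneg (by norm_num)]
  intro j
  have h1 : z j ^2 ≤ ∑ k, z k ^2 :=
    Finset.single_le_sum (f := fun k => z k ^2) (fun k _ => sq_nonneg _) (Finset.mem_univ j)
  have h2 : ∑ k, z k ^2 ≤ 1 - (4*(m+2):ℝ)⁻¹ := hz
  have h3 : (0:ℝ) < (4*(m+2):ℝ)⁻¹ := by positivity
  rw [Real.norm_eq_abs]
  nlinarith [sq_abs (z j), abs_nonneg (z j)]

lemma gmap_image_meas_le (m : ℕ) (i : Fin (m+2)) (ε : ℝ) (hε : |ε| = 1) :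
    μH[((m+1:ℕ) : ℝ)] (gmap m i ε '' gdom m) ≤
      ((3*(m+2)^2 : ℝ≥0) : ℝ≥0∞)^((m+1:ℕ) : ℝ) * volume (Metric.closedBall (0 : Fin (m+1) → ℝ) 1) := by
  calc μH[((m+1:ℕ) : ℝ)] (gmap m i ε '' gdom m)
      ≤ ((3*(m+2)^2 : ℝ≥0) : ℝ≥0∞)^((m+1:ℕ) : ℝ) * μH[((m+1:ℕ) : ℝ)] (gdom m) :=
        (gmap_lipschitz m i ε hε).hausdorffMeasure_image_le (by positivity)
    _ ≤ _ := by
        apply mul_le_mul_right _ _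
        rw [hausdorff_eq_volume_pi]
        exact measure_mono (gdom_subset_ball m)

lemma sphere_hausdorff_lt_top (m : ℕ) :
    μH[((m+1:ℕ) : ℝ)] (Metric.sphere (0 : En (m+2)) 1) < ∞ := by
  have hb : volume (Metric.closedBall (0 : Fin (m+1) → ℝ) 1) < ∞ :=
    (isCompact_closedBall _ _).measure_lt_top
  calc μH[((m+1:ℕ) : ℝ)] (Metric.sphere (0 : En (m+2)) 1)
      ≤ μH[((m+1:ℕ) : ℝ)] (⋃ i : Fin (m+2), (gmap m i 1 '' gdom m ∪ gmap m i (-1) '' gdom m)) :=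
        measure_mono (sphere_subset_cover m)
    _ ≤ ∑ i : Fin (m+2), μH[((m+1:ℕ) : ℝ)] (gmap m i 1 '' gdom m ∪ gmap m i (-1) '' gdom m) :=
        measure_iUnion_fintype_le _ _
    _ < ∞ := by
        apply ENNReal.sum_lt_top.mpr
        intro i _
        apply lt_of_le_of_lt (measure_union_le _ _)
        have h1 := gmap_image_meas_le m i 1 (by norm_num)
        have h2 := gmap_image_meas_le m i (-1) (by norm_num)
        have hK : ((3*(m+2)^2 : ℝ≥0) : ℝ≥0∞)^((m+1:ℕ) : ℝ) < ∞ := by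
          apply ENNReal.rpow_lt_top_of_nonneg (by positivity)
          exact ENNReal.coe_ne_top
        exact ENNReal.add_lt_top.mpr ⟨lt_of_le_of_lt h1 (ENNReal.mul_lt_top hK hb),
          lt_of_le_of_lt h2 (ENNReal.mul_lt_top hK hb)⟩

def e1' (m : ℕ) : En (m+2) := EuclideanSpace.single (0 : Fin (m+2)) (1:ℝ)

lemma e1'_apply_zero (m : ℕ) : e1' m 0 = 1 := by
  simp [e1', EuclideanSpace.single_apply]

lemma e1'_apply_succAbove (m : ℕ) (j : Fin (m+1)) : e1' m ((0 : Fin (m+2)).succAbove j) = 0 := by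
  have h : (0 : Fin (m+2)).succAbove j ≠ 0 := Fin.succAbove_ne _ _
  simp only [e1', EuclideanSpace.single_apply, if_neg h]

def capSet (m : ℕ) (τ : ℝ) : Set (En (m+2)) := {ν | ‖e1' m - ν‖ ≤ τ}

lemma μSph_eq (m : ℕ) : μSph (m+2) =
    (μH[((m+1:ℕ) : ℝ)] : Measure (En (m+2))).restrict (Metric.sphere 0 1) := by
  unfold μSph
  congr 1
  push_cast
  ring

lemma isClosed_capSet (m : ℕ) (τ : ℝ) : IsClosed (capSet m τ) :=
  isClosed_le (by fun_prop) continuous_const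

lemma μSph_capSet_eq (m : ℕ) (τ : ℝ) :
    μSph (m+2) (capSet m τ) =
      μH[((m+1:ℕ) : ℝ)] (capSet m τ ∩ Metric.sphere (0 : En (m+2)) 1) := by
  rw [μSph_eq, Measure.restrict_apply (isClosed_capSet m τ).measurableSet]

-- upper bound for small caps
lemma capSet_subset_graph (m : ℕ) {τ : ℝ} (hτ0 : 0 < τ) (hτ : τ ≤ 1/2) :
    capSet m τ ∩ Metric.sphere (0 : En (m+2)) 1 ⊆
      gmap m 0 1 '' (gdom m ∩ Metric.closedBall (0 : Fin (m+1) → ℝ) τ) := by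
  rintro ν ⟨hcap, hsph⟩
  have hν1 : ‖ν‖ = 1 := by simpa using mem_sphere_zero_iff_norm.mp hsph
  have hsum : ∑ k, ν k ^ 2 = 1 := by rw [← norm_sq_eq, hν1]; norm_num
  have hcap' : ‖e1' m - ν‖ ≤ τ := hcap
  have h0 : |1 - ν 0| ≤ τ := by
    have := coord_abs_le_norm (e1' m - ν) 0
    rw [PiLp.sub_apply, e1'_apply_zero] at this
    exact le_trans this hcap'
  have hν0 : 1/2 ≤ ν 0 := by
    have := abs_le.mp h0
    linarith
  set z := (0 : Fin (m+2)).removeNth ν with hzdef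
  have hzsum : ∑ j, z j ^ 2 = 1 - ν 0 ^2 := by
    have h := Fin.sum_univ_succAbove (fun k => ν k ^2) (0 : Fin (m+2))
    rw [hsum] at h
    have : 1 = ν 0 ^2 + ∑ j, z j ^2 := h
    linarith
  have hzdom : z ∈ gdom m := by
    simp only [gdom, Set.mem_setOf_eq, hzsum]
    have h1 : (4*(m+2):ℝ)⁻¹ ≤ 1/4 := by
      rw [show (1:ℝ)/4 = (4:ℝ)⁻¹ by norm_num]
      apply inv_anti₀ (by norm_num)
      have : (0:ℝ) ≤ (m:ℝ) := Nat.cast_nonneg m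
      linarith
    nlinarith
  have hzball : z ∈ Metric.closedBall (0 : Fin (m+1) → ℝ) τ := by
    rw [Metric.mem_closedBall, dist_zero_right, pi_norm_le_iff_of_nonneg (le_of_lt hτ0)]
    intro j
    rw [Real.norm_eq_abs]
    have := coord_abs_le_norm (e1' m - ν) ((0 : Fin (m+2)).succAbove j)
    rw [PiLp.sub_apply, e1'_apply_succAbove] at this
    have h2 : |z j| = |(0:ℝ) - ν ((0 : Fin (m+2)).succAbove j)| := by
      rw [hzdef]
      simp [Fin.removeNth, abs_sub_comm]
    rw [h2]
    exact le_trans this hcap'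
  refine ⟨z, ⟨hzdom, hzball⟩, ?_⟩
  unfold gmap
  have hval : (1:ℝ) * Real.sqrt (1 - ∑ j, z j ^2) = ν 0 := by
    rw [hzsum, one_mul, show (1:ℝ) - (1 - ν 0^2) = ν 0^2 by ring, Real.sqrt_sq_eq_abs,
      abs_of_nonneg (by linarith)]
  rw [hval, hzdef]
  exact congrArg (WithLp.toLp 2) (Fin.insertNth_self_removeNth _ ν)

lemma capSet_meas_le_small (m : ℕ) {τ : ℝ} (hτ0 : 0 < τ) (hτ : τ ≤ 1/2) :
    μSph (m+2) (capSet m τ) ≤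
      ((3*(m+2)^2 : ℝ≥0) : ℝ≥0∞)^((m+1:ℕ) : ℝ) * ENNReal.ofReal ((2*τ)^(m+1)) := by
  rw [μSph_capSet_eq]
  calc μH[((m+1:ℕ) : ℝ)] (capSet m τ ∩ Metric.sphere (0 : En (m+2)) 1)
      ≤ μH[((m+1:ℕ) : ℝ)] (gmap m 0 1 '' (gdom m ∩ Metric.closedBall (0 : Fin (m+1) → ℝ) τ)) :=
        measure_mono (capSet_subset_graph m hτ0 hτ)
    _ ≤ ((3*(m+2)^2 : ℝ≥0) : ℝ≥0∞)^((m+1:ℕ) : ℝ) *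
          μH[((m+1:ℕ) : ℝ)] (gdom m ∩ Metric.closedBall (0 : Fin (m+1) → ℝ) τ) :=
        ((gmap_lipschitz m 0 1 (by norm_num)).mono Set.inter_subset_left).hausdorffMeasure_image_le
          (by positivity)
    _ ≤ _ := by
        apply mul_le_mul_right
        rw [hausdorff_eq_volume_pi]
        calc volume (gdom m ∩ Metric.closedBall (0 : Fin (m+1) → ℝ) τ)
            ≤ volume (Metric.closedBall (0 : Fin (m+1) → ℝ) τ) :=
              measure_mono Set.inter_subset_right
          _ = ENNReal.ofReal ((2*τ)^(m+1)) := by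
              rw [Real.volume_pi_closedBall _ (le_of_lt hτ0)]
              simp [Fintype.card_fin]

-- lower bound for caps : the projection
set_option maxHeartbeats 1000000 in
lemma cube_subset_proj_cap (m : ℕ) {τ : ℝ} (hτ0 : 0 < τ) (hτ : τ ≤ 1) :
    Metric.closedBall (0 : Fin (m+1) → ℝ) (τ/(2*Real.sqrt (m+2))) ⊆
      (fun ν : En (m+2) => (0 : Fin (m+2)).removeNth ν) ''
        (capSet m τ ∩ Metric.sphere (0 : En (m+2)) 1) := by
  intro z hz
  set n : ℝ := (m+2:ℝ) with hn
  have hnpos : (0:ℝ) < n := by positivity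
  have hsn : (0:ℝ) < Real.sqrt n := Real.sqrt_pos.mpr hnpos
  set t : ℝ := τ/(2*Real.sqrt n) with ht
  have ht0 : 0 ≤ t := by positivity
  rw [Metric.mem_closedBall, dist_zero_right] at hz
  have hcoord : ∀ j, |z j| ≤ t := by
    intro j
    have h := norm_le_pi_norm z j
    rw [Real.norm_eq_abs] at h
    exact le_trans h hz
  set a := ∑ j, z j ^2 with hadef
  have ha0 : 0 ≤ a := by positivity
  have hat : a ≤ (m+1) * t^2 := by
    rw [hadef]
    calc ∑ j, z j ^2 ≤ ∑ _j : Fin (m+1), t^2 := by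
          apply Finset.sum_le_sum
          intro j _
          nlinarith [hcoord j, abs_nonneg (z j), sq_abs (z j)]
      _ = (m+1) * t^2 := by
          simp only [Finset.sum_const, Finset.card_univ, Fintype.card_fin, nsmul_eq_mul]
          push_cast; ring
  have htsq : (m+1) * t^2 ≤ τ^2/4 := by
    have hsq : (Real.sqrt n)^2 = n := Real.sq_sqrt (le_of_lt hnpos)
    have h2 : t^2 = τ^2/(4*n) := by
      rw [ht, div_pow, mul_pow, hsq]; norm_num
    have hm1 : (m+1:ℝ) ≤ n := by rw [hn]; push_cast; linarith
    rw [h2]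
    calc (m+1:ℝ) * (τ^2/(4*n)) ≤ n * (τ^2/(4*n)) :=
          mul_le_mul_of_nonneg_right hm1 (by positivity)
      _ = τ^2/4 := by field_simp
  have haq : a ≤ τ^2/4 := le_trans hat htsq
  have haq1 : a ≤ 1/4 := by nlinarith
  set ν := gmap m 0 1 z with hνdef
  have hν0 : ν 0 = Real.sqrt (1 - a) := by rw [hνdef, gmap_apply_same, one_mul]
  have hνj : ∀ j, ν ((0:Fin (m+2)).succAbove j) = z j := fun j => by
    rw [hνdef, gmap_apply_succAbove]
  have hsq : Real.sqrt (1-a) ^2 = 1 - a := Real.sq_sqrt (by linarith)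
  have hνsum : ∑ k, ν k ^2 = 1 := by
    rw [Fin.sum_univ_succAbove (fun k => ν k ^2) 0]
    have : ∑ j, ν ((0:Fin (m+2)).succAbove j) ^2 = a := by
      rw [hadef]
      exact Finset.sum_congr rfl (fun j _ => by rw [hνj j])
    rw [this, hν0, hsq]
    ring
  have hνsph : ν ∈ Metric.sphere (0 : En (m+2)) 1 := by
    rw [mem_sphere_zero_iff_norm]
    have h1 : ‖ν‖^2 = 1 := by rw [norm_sq_eq]; exact hνsum
    nlinarith [norm_nonneg ν]
  have hνcap : ν ∈ capSet m τ := by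
    have hsub : ‖e1' m - ν‖^2 = (1 - Real.sqrt (1-a))^2 + a := by
      rw [norm_sq_eq, Fin.sum_univ_succAbove (fun k => ((e1' m - ν) k)^2) 0]
      congr 1
      · rw [PiLp.sub_apply, e1'_apply_zero, hν0]
      · rw [hadef]
        apply Finset.sum_congr rfl
        intro j _
        rw [PiLp.sub_apply, e1'_apply_succAbove, hνj j]
        ring
    have hub : 1 - Real.sqrt (1-a) ≤ a := by
      nlinarith [Real.sqrt_le_sqrt (show 1 - a ≤ 1 by linarith),
        Real.sqrt_one, Real.sqrt_nonneg (1-a), hsq]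
    have h2 : ‖e1' m - ν‖^2 ≤ τ^2 := by
      rw [hsub]
      have h3 : 0 ≤ 1 - Real.sqrt (1-a) := by
        nlinarith [Real.sqrt_le_sqrt (show 1 - a ≤ 1 by linarith), Real.sqrt_one]
      nlinarith
    exact le_of_sq_le_sq' (le_of_lt hτ0) h2 (norm_nonneg _)
  exact ⟨ν, ⟨hνcap, hνsph⟩, by rw [hνdef]; unfold gmap; exact Fin.removeNth_insertNth _ _ _⟩

lemma removeNth_lipschitz (m : ℕ) :
    LipschitzWith 1 (fun ν : En (m+2) => (0 : Fin (m+2)).removeNth ν) := by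
  apply LipschitzWith.of_dist_le_mul
  intro ν ν'
  rw [NNReal.coe_one, one_mul]
  rw [dist_pi_le_iff dist_nonneg]
  intro j
  rw [Real.dist_eq]
  have h1 : (0:Fin (m+2)).removeNth ν j - (0:Fin (m+2)).removeNth ν' j
      = (ν - ν') ((0:Fin (m+2)).succAbove j) := by
    rw [PiLp.sub_apply]; rfl
  rw [h1]
  calc |(ν - ν') ((0:Fin (m+2)).succAbove j)| ≤ ‖ν - ν'‖ := coord_abs_le_norm _ _
    _ = dist ν ν' := (dist_eq_norm _ _).symm

lemma capSet_meas_ge (m : ℕ) {τ : ℝ} (hτ0 : 0 < τ) (hτ : τ ≤ 1) :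
    ENNReal.ofReal ((τ/Real.sqrt (m+2))^(m+1)) ≤ μSph (m+2) (capSet m τ) := by
  rw [μSph_capSet_eq]
  have hsn : (0:ℝ) < Real.sqrt (m+2) := Real.sqrt_pos.mpr (by positivity)
  have ht0 : (0:ℝ) ≤ τ/(2*Real.sqrt (m+2)) := by positivity
  calc ENNReal.ofReal ((τ/Real.sqrt (m+2))^(m+1))
      = volume (Metric.closedBall (0 : Fin (m+1) → ℝ) (τ/(2*Real.sqrt (m+2)))) := by
        rw [Real.volume_pi_closedBall _ ht0, Fintype.card_fin]
        congr 2
        field_simp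
    _ = μH[((m+1:ℕ) : ℝ)] (Metric.closedBall (0 : Fin (m+1) → ℝ) (τ/(2*Real.sqrt (m+2)))) := by
        rw [hausdorff_eq_volume_pi]
    _ ≤ μH[((m+1:ℕ) : ℝ)] ((fun ν : En (m+2) => (0 : Fin (m+2)).removeNth ν) ''
          (capSet m τ ∩ Metric.sphere (0 : En (m+2)) 1)) :=
        measure_mono (cube_subset_proj_cap m hτ0 hτ)
    _ ≤ ((1:ℝ≥0) : ℝ≥0∞)^((m+1:ℕ) : ℝ) *
          μH[((m+1:ℕ) : ℝ)] (capSet m τ ∩ Metric.sphere (0 : En (m+2)) 1) :=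
        (removeNth_lipschitz m).hausdorffMeasure_image_le (by positivity) _
    _ = μH[((m+1:ℕ) : ℝ)] (capSet m τ ∩ Metric.sphere (0 : En (m+2)) 1) := by
        simp

def slab (m : ℕ) (τ : ℝ) : Set (En (m+2)) := {y | ‖y‖^2 + |y 0| ≤ τ^2}

lemma volume_box (m : ℕ) (r : Fin (m+2) → ℝ) :
    volume {y : En (m+2) | ∀ i, |y i| ≤ r i} = ∏ i, ENNReal.ofReal (2 * r i) := by
  have hmp := EuclideanSpace.volume_preserving_symm_measurableEquiv_toLp (Fin (m+2))
  have hset : {y : En (m+2) | ∀ i, |y i| ≤ r i} =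
      (MeasurableEquiv.toLp 2 (Fin (m+2) → ℝ)).symm ⁻¹'
        (Set.pi Set.univ fun i => Set.Icc (-(r i)) (r i)) := by
    ext y
    simp only [Set.mem_preimage, Set.mem_pi, Set.mem_univ, forall_true_left, Set.mem_Icc,
      Set.mem_setOf_eq]
    constructor
    · intro h i
      have := abs_le.mp (h i)
      exact ⟨this.1, this.2⟩
    · intro h i
      exact abs_le.mpr ⟨(h i).1, (h i).2⟩
  rw [hset, hmp.measure_preimage
    (MeasurableSet.univ_pi (fun i => measurableSet_Icc)).nullMeasurableSet]
  rw [volume_pi_pi]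
  apply Finset.prod_congr rfl
  intro i _
  rw [Real.volume_Icc]
  congr 1
  ring

lemma slab_subset_box (m : ℕ) {τ : ℝ} (hτ0 : 0 < τ) :
    slab m τ ⊆ {y : En (m+2) | ∀ i, |y i| ≤ (if i = 0 then min (τ^2) τ else τ)} := by
  intro y hy
  have hy' : ‖y‖^2 + |y 0| ≤ τ^2 := hy
  have hn : ‖y‖ ≤ τ := by
    apply le_of_sq_le_sq' (le_of_lt hτ0) _ (norm_nonneg _)
    have : 0 ≤ |y 0| := abs_nonneg _
    linarith
  intro i
  by_cases hi : i = 0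
  · subst hi
    rw [if_pos rfl]
    apply le_min
    · have : 0 ≤ ‖y‖^2 := sq_nonneg _
      linarith
    · exact le_trans (coord_abs_le_norm y 0) hn
  · rw [if_neg hi]
    exact le_trans (coord_abs_le_norm y i) hn

lemma box_subset_slab (m : ℕ) {τ : ℝ} (hτ0 : 0 < τ) :
    {y : En (m+2) | ∀ i, |y i| ≤
        (if i = 0 then min (τ^2) τ / 2 else τ/(2*Real.sqrt (m+2)))} ⊆ slab m τ := by
  intro y hy
  set n : ℝ := (m+2:ℝ) with hn
  have hnpos : (0:ℝ) < n := by positivity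
  have hsn : (0:ℝ) < Real.sqrt n := Real.sqrt_pos.mpr hnpos
  have hy0 : |y 0| ≤ min (τ^2) τ / 2 := by simpa using hy 0
  have hyj : ∀ j : Fin (m+1), |y ((0:Fin (m+2)).succAbove j)| ≤ τ/(2*Real.sqrt n) := by
    intro j
    have h := hy ((0:Fin (m+2)).succAbove j)
    rwa [if_neg (Fin.succAbove_ne _ _)] at h
  have hsum : ‖y‖^2 = y 0 ^2 + ∑ j, y ((0:Fin (m+2)).succAbove j) ^2 := by
    rw [norm_sq_eq]
    exact Fin.sum_univ_succAbove (fun k => y k ^2) 0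
  have h1 : y 0 ^2 ≤ τ^2/4 := by
    have h2 : |y 0| ≤ τ/2 := le_trans hy0 (by
      have : min (τ^2) τ ≤ τ := min_le_right _ _
      linarith)
    nlinarith [abs_nonneg (y 0), sq_abs (y 0)]
  have hsq : (Real.sqrt n)^2 = n := Real.sq_sqrt (le_of_lt hnpos)
  have h2 : ∑ j, y ((0:Fin (m+2)).succAbove j) ^2 ≤ τ^2/4 := by
    have hb : ∀ j : Fin (m+1), y ((0:Fin (m+2)).succAbove j) ^2 ≤ τ^2/(4*n) := by
      intro j
      have := hyj j
      have ht2 : (τ/(2*Real.sqrt n))^2 = τ^2/(4*n) := by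
        rw [div_pow, mul_pow, hsq]; norm_num
      nlinarith [abs_nonneg (y ((0:Fin (m+2)).succAbove j)),
        sq_abs (y ((0:Fin (m+2)).succAbove j))]
    calc ∑ j, y ((0:Fin (m+2)).succAbove j) ^2 ≤ ∑ _j : Fin (m+1), τ^2/(4*n) :=
          Finset.sum_le_sum (fun j _ => hb j)
      _ = (m+1) * (τ^2/(4*n)) := by
          simp only [Finset.sum_const, Finset.card_univ, Fintype.card_fin, nsmul_eq_mul]
          push_cast; ring
      _ ≤ n * (τ^2/(4*n)) := by
          apply mul_le_mul_of_nonneg_right _ (by positivity)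
          rw [hn]; push_cast; linarith
      _ = τ^2/4 := by field_simp
  have h3 : |y 0| ≤ τ^2/2 := by
    have : min (τ^2) τ ≤ τ^2 := min_le_left _ _
    linarith
  show ‖y‖^2 + |y 0| ≤ τ^2
  rw [hsum]
  linarith

lemma prod_box_split (m : ℕ) (c b : ℝ) :
    (∏ i : Fin (m+2), ENNReal.ofReal (2 * (if i = 0 then c else b)))
      = ENNReal.ofReal (2*c) * ENNReal.ofReal (2*b)^(m+1) := by
  rw [Fin.prod_univ_succAbove (fun i => ENNReal.ofReal (2 * (if i = 0 then c else b))) 0,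
    if_pos rfl]
  congr 1
  rw [Finset.prod_congr rfl (fun j _ => by rw [if_neg (Fin.succAbove_ne _ _)]),
    Finset.prod_const, Finset.card_univ, Fintype.card_fin]

lemma volume_slab_le (m : ℕ) {τ : ℝ} (hτ0 : 0 < τ) :
    volume (slab m τ) ≤ ENNReal.ofReal (2 * min (τ^2) τ) * ENNReal.ofReal (2*τ)^(m+1) := by
  calc volume (slab m τ)
      ≤ volume {y : En (m+2) | ∀ i, |y i| ≤ (if i = 0 then min (τ^2) τ else τ)} :=
        measure_mono (slab_subset_box m hτ0)
    _ = _ := by rw [volume_box, prod_box_split]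

lemma volume_slab_ge (m : ℕ) {τ : ℝ} (hτ0 : 0 < τ) :
    ENNReal.ofReal (min (τ^2) τ) * ENNReal.ofReal (τ/Real.sqrt (m+2))^(m+1)
      ≤ volume (slab m τ) := by
  have hsn : (0:ℝ) < Real.sqrt (m+2) := Real.sqrt_pos.mpr (by positivity)
  calc ENNReal.ofReal (min (τ^2) τ) * ENNReal.ofReal (τ/Real.sqrt (m+2))^(m+1)
      = ENNReal.ofReal (2 * (min (τ^2) τ / 2)) *
          ENNReal.ofReal (2 * (τ/(2*Real.sqrt (m+2))))^(m+1) := by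
        congr 2
        · ring
        · congr 1
          field_simp
    _ = volume {y : En (m+2) | ∀ i, |y i| ≤
          (if i = 0 then min (τ^2) τ / 2 else τ/(2*Real.sqrt (m+2)))} := by
        rw [volume_box, prod_box_split]
    _ ≤ volume (slab m τ) := measure_mono (box_subset_slab m hτ0)

lemma μSph_univ_lt_top (m : ℕ) : μSph (m+2) Set.univ < ∞ := by
  rw [μSph_eq, Measure.restrict_apply_univ]
  exact sphere_hausdorff_lt_top m

lemma isFiniteMeasure_μSph (m : ℕ) : IsFiniteMeasure (μSph (m+2)) :=
  ⟨μSph_univ_lt_top m⟩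

lemma inner_e1' (m : ℕ) (v : En (m+2)) : (inner ℝ (e1' m) v : ℝ) = v 0 := by
  rw [e1', EuclideanSpace.inner_single_left]
  simp

lemma Ball_subset_prod (m : ℕ) {τ : ℝ} (hτ0 : 0 < τ) :
    Ball (m+2) 0 (e1' m) τ ⊆ slab m τ ×ˢ capSet m τ := by
  rintro ⟨y, ν⟩ hp
  have hp' : ‖(0:En (m+2)) - y‖^2 + |(inner ℝ (e1' m) ((0:En (m+2)) - y) : ℝ)| +
      ‖e1' m - ν‖^2 ≤ τ^2 := hp
  rw [zero_sub, norm_neg, inner_e1'] at hp'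
  have h0 : ((-y : En (m+2)) 0) = -(y 0) := rfl
  rw [h0, abs_neg] at hp'
  constructor
  · show ‖y‖^2 + |y 0| ≤ τ^2
    nlinarith [sq_nonneg ‖e1' m - ν‖]
  · show ‖e1' m - ν‖ ≤ τ
    apply le_of_sq_le_sq' (le_of_lt hτ0) _ (norm_nonneg _)
    nlinarith [sq_nonneg ‖y‖, abs_nonneg (y 0)]

lemma prod_subset_Ball (m : ℕ) {τ : ℝ} (hτ0 : 0 < τ) :
    slab m (τ/2) ×ˢ capSet m (τ/2) ⊆ Ball (m+2) 0 (e1' m) τ := by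
  rintro ⟨y, ν⟩ ⟨h1, h2⟩
  have h1' : ‖y‖^2 + |y 0| ≤ (τ/2)^2 := h1
  have h2' : ‖e1' m - ν‖ ≤ τ/2 := h2
  show ‖(0:En (m+2)) - y‖^2 + |(inner ℝ (e1' m) ((0:En (m+2)) - y) : ℝ)| + ‖e1' m - ν‖^2 ≤ τ^2
  rw [zero_sub, norm_neg, inner_e1']
  have h0 : ((-y : En (m+2)) 0) = -(y 0) := rfl
  rw [h0, abs_neg]
  have h3 : ‖e1' m - ν‖^2 ≤ (τ/2)^2 :=
    pow_le_pow_left₀ (norm_nonneg _) h2' 2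
  nlinarith

lemma μSp_ball_le_prod (m : ℕ) {τ : ℝ} (hτ0 : 0 < τ) :
    μSp (m+2) (Ball (m+2) 0 (e1' m) τ) ≤ volume (slab m τ) * μSph (m+2) (capSet m τ) := by
  haveI := isFiniteMeasure_μSph m
  calc μSp (m+2) (Ball (m+2) 0 (e1' m) τ)
      ≤ μSp (m+2) (slab m τ ×ˢ capSet m τ) := measure_mono (Ball_subset_prod m hτ0)
    _ = volume (slab m τ) * μSph (m+2) (capSet m τ) := Measure.prod_prod _ _

lemma μSp_ball_ge_prod (m : ℕ) {τ : ℝ} (hτ0 : 0 < τ) :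
    volume (slab m (τ/2)) * μSph (m+2) (capSet m (τ/2)) ≤
      μSp (m+2) (Ball (m+2) 0 (e1' m) τ) := by
  haveI := isFiniteMeasure_μSph m
  calc volume (slab m (τ/2)) * μSph (m+2) (capSet m (τ/2))
      = μSp (m+2) (slab m (τ/2) ×ˢ capSet m (τ/2)) := (Measure.prod_prod _ _).symm
    _ ≤ μSp (m+2) (Ball (m+2) 0 (e1' m) τ) := measure_mono (prod_subset_Ball m hτ0)

lemma μSp_ball_translate (m : ℕ) (x ω : En (m+2)) (τ : ℝ) :
    μSp (m+2) (Ball (m+2) x ω τ) = μSp (m+2) (Ball (m+2) 0 ω τ) := by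
  haveI := isFiniteMeasure_μSph m
  have hT : MeasurePreserving (Prod.map (fun y : En (m+2) => y + (-x)) id)
      (μSp (m+2)) (μSp (m+2)) :=
    (measurePreserving_add_right volume (-x)).prod (MeasurePreserving.id _)
  have hset : Ball (m+2) x ω τ =
      (Prod.map (fun y : En (m+2) => y + (-x)) id) ⁻¹' Ball (m+2) 0 ω τ := by
    ext p
    show (‖x - p.1‖ ^ 2 + |(inner ℝ ω (x - p.1) : ℝ)| + ‖ω - p.2‖ ^ 2 ≤ τ ^ 2) ↔
      (‖(0:En (m+2)) - (p.1 + -x)‖ ^ 2 + |(inner ℝ ω ((0:En (m+2)) - (p.1 + -x)) : ℝ)| +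
        ‖ω - p.2‖ ^ 2 ≤ τ ^ 2)
    have h : (0:En (m+2)) - (p.1 + -x) = x - p.1 := by abel
    rw [h]
  rw [hset, hT.measure_preimage (measurableSet_Ball _ _ _ _).nullMeasurableSet]

lemma exists_rotation (m : ℕ) (ω : En (m+2)) (hω : ‖ω‖ = 1) :
    ∃ A : En (m+2) ≃ₗᵢ[ℝ] En (m+2), A (e1' m) = ω := by
  by_cases h : e1' m = ω
  · exact ⟨LinearIsometryEquiv.refl ℝ _, h⟩
  · refine ⟨Submodule.reflection (ℝ ∙ (e1' m - ω))ᗮ, ?_⟩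
    apply Submodule.reflection_sub
    rw [hω, e1', EuclideanSpace.norm_single, norm_one]

lemma μSph_rot (m : ℕ) (A : En (m+2) ≃ₗᵢ[ℝ] En (m+2)) :
    MeasurePreserving A (μSph (m+2)) (μSph (m+2)) := by
  have hiso : Isometry A := A.isometry
  have h1 : MeasurePreserving A (μH[((m+2:ℕ):ℝ) - 1] : Measure (En (m+2)))
      (μH[((m+2:ℕ):ℝ) - 1]) := by
    refine ⟨A.continuous.measurable, ?_⟩
    rw [hiso.map_hausdorffMeasure (Or.inr A.surjective), A.surjective.range_eq,
      Measure.restrict_univ]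
  have hpre : A ⁻¹' (Metric.sphere (0 : En (m+2)) 1) = Metric.sphere 0 1 := by
    ext y
    simp only [Set.mem_preimage, mem_sphere_zero_iff_norm]
    rw [A.norm_map]
  have := h1.restrict_preimage (s := Metric.sphere 0 1) Metric.isClosed_sphere.measurableSet
  rw [hpre] at this
  exact this

lemma μSp_ball_rotate (m : ℕ) (ω : En (m+2)) (hω : ‖ω‖ = 1) (τ : ℝ) :
    μSp (m+2) (Ball (m+2) 0 ω τ) = μSp (m+2) (Ball (m+2) 0 (e1' m) τ) := by
  haveI := isFiniteMeasure_μSph m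
  obtain ⟨A, hA⟩ := exists_rotation m ω hω
  have hT : MeasurePreserving (Prod.map (A.symm : En (m+2) → En (m+2)) A.symm)
      (μSp (m+2)) (μSp (m+2)) :=
    (A.symm.measurePreserving).prod (μSph_rot m A.symm)
  have hset : Ball (m+2) 0 ω τ =
      (Prod.map (A.symm : En (m+2) → En (m+2)) A.symm) ⁻¹' Ball (m+2) 0 (e1' m) τ := by
    ext p
    show (‖(0:En (m+2)) - p.1‖ ^ 2 + |(inner ℝ ω ((0:En (m+2)) - p.1) : ℝ)| +
        ‖ω - p.2‖ ^ 2 ≤ τ ^ 2) ↔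
      (‖(0:En (m+2)) - A.symm p.1‖ ^ 2 + |(inner ℝ (e1' m) ((0:En (m+2)) - A.symm p.1) : ℝ)| +
        ‖e1' m - A.symm p.2‖ ^ 2 ≤ τ ^ 2)
    have h0s : (0:En (m+2)) - A.symm p.1 = A.symm ((0:En (m+2)) - p.1) := by
      rw [map_sub, map_zero]
    have hv : (inner ℝ (e1' m) (A.symm ((0:En (m+2)) - p.1)) : ℝ) =
        inner ℝ ω ((0:En (m+2)) - p.1) := by
      calc (inner ℝ (e1' m) (A.symm ((0:En (m+2)) - p.1)) : ℝ)
          = inner ℝ (A (e1' m)) (A (A.symm ((0:En (m+2)) - p.1))) :=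
            (A.inner_map_map _ _).symm
        _ = inner ℝ ω ((0:En (m+2)) - p.1) := by rw [hA, A.apply_symm_apply]
    have h3 : ‖e1' m - A.symm p.2‖ = ‖ω - p.2‖ := by
      rw [← A.norm_map (e1' m - A.symm p.2), map_sub, hA, A.apply_symm_apply]
    rw [h0s, hv, h3, LinearIsometryEquiv.norm_map]
  rw [hset, hT.measure_preimage (measurableSet_Ball _ _ _ _).nullMeasurableSet]

def hfun (m : ℕ) (τ : ℝ) : ℝ := min (τ^2) τ * τ^(m+1) * min τ 1 ^(m+1)

lemma hfun_pos (m : ℕ) {τ : ℝ} (hτ : 0 < τ) : 0 < hfun m τ := by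
  unfold hfun
  have h1 : 0 < min (τ^2) τ := lt_min (by positivity) hτ
  have h2 : 0 < min τ 1 := lt_min hτ one_pos
  positivity

lemma capSet_mono (m : ℕ) {σ τ : ℝ} (h : σ ≤ τ) : capSet m σ ⊆ capSet m τ :=
  fun ν hν => le_trans hν h

lemma capSet_meas_lower (m : ℕ) : ∀ τ : ℝ, 0 < τ →
    ENNReal.ofReal ((1/Real.sqrt (m+2))^(m+1) * min τ 1 ^(m+1)) ≤
      μSph (m+2) (capSet m τ) := by
  intro τ hτ
  have hsn : (0:ℝ) < Real.sqrt (m+2) := Real.sqrt_pos.mpr (by positivity)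
  rcases le_or_gt τ 1 with h | h
  · have := capSet_meas_ge m hτ h
    have heq : (τ/Real.sqrt (m+2))^(m+1) = (1/Real.sqrt (m+2))^(m+1) * min τ 1 ^(m+1) := by
      rw [min_eq_left h, ← mul_pow]
      congr 1
      field_simp
    rwa [heq] at this
  · have h1 := capSet_meas_ge m one_pos le_rfl
    have heq : (1/Real.sqrt (m+2))^(m+1) * min τ 1 ^(m+1) = ((1:ℝ)/Real.sqrt (m+2))^(m+1) := by
      rw [min_eq_right (le_of_lt h), one_pow, mul_one]
    rw [heq]
    calc ENNReal.ofReal ((1/Real.sqrt (m+2))^(m+1))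
        = ENNReal.ofReal (((1:ℝ)/Real.sqrt (m+2))^(m+1)) := rfl
      _ ≤ μSph (m+2) (capSet m 1) := by
          have heq2 : ((1:ℝ)/Real.sqrt (m+2))^(m+1) = ((1:ℝ)/Real.sqrt (m+2))^(m+1) := rfl
          simpa [one_div] using h1
      _ ≤ μSph (m+2) (capSet m τ) := measure_mono (capSet_mono m (le_of_lt h))

lemma capSet_meas_upper (m : ℕ) : ∃ C : ℝ, 0 < C ∧ ∀ τ : ℝ, 0 < τ →
    μSph (m+2) (capSet m τ) ≤ ENNReal.ofReal (C * min τ 1 ^(m+1)) := by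
  set Ms : ℝ := (μSph (m+2) Set.univ).toReal with hMsdef
  have hMs0 : 0 ≤ Ms := ENNReal.toReal_nonneg
  refine ⟨(3*(m+2:ℝ)^2)^(m+1) * 2^(m+1) + (Ms+1) * 2^(m+1), by positivity, ?_⟩
  set C : ℝ := (3*(m+2:ℝ)^2)^(m+1) * 2^(m+1) + (Ms+1) * 2^(m+1) with hCdef
  intro τ hτ
  have hmin0 : 0 < min τ 1 := lt_min hτ one_pos
  rcases le_or_gt τ (1/2) with h | h
  · have hb := capSet_meas_le_small m hτ h
    have hmin : min τ 1 = τ := min_eq_left (by linarith)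
    have hconv : ((3*(m+2)^2 : ℝ≥0) : ℝ≥0∞)^((m+1:ℕ) : ℝ) * ENNReal.ofReal ((2*τ)^(m+1))
        = ENNReal.ofReal ((3*(m+2:ℝ)^2)^(m+1) * (2*τ)^(m+1)) := by
      have hKc : ((3*(m+2:ℝ)^2)^(m+1)) = (((3*(m+2)^2 : ℝ≥0)^(m+1) : ℝ≥0) : ℝ) := by
        push_cast; ring
      rw [ENNReal.rpow_natCast, ENNReal.ofReal_mul (by positivity), hKc,
        ENNReal.ofReal_coe_nnreal, ENNReal.coe_pow]
    rw [hconv] at hb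
    apply le_trans hb
    apply ENNReal.ofReal_le_ofReal
    rw [hmin]
    have h2 : (0:ℝ) ≤ (3*(m+2:ℝ)^2)^(m+1) := by positivity
    have h3 : (0:ℝ) ≤ τ^(m+1) := by positivity
    have h4 : (0:ℝ) ≤ (Ms+1) * 2^(m+1) := by positivity
    have he : (2*τ)^(m+1) = 2^(m+1) * τ^(m+1) := mul_pow _ _ _
    rw [he, hCdef]
    nlinarith [mul_nonneg h4 h3]
  · have hb : μSph (m+2) (capSet m τ) ≤ ENNReal.ofReal Ms := by
      rw [hMsdef, ENNReal.ofReal_toReal (μSph_univ_lt_top m).ne]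
      exact measure_mono (Set.subset_univ _)
    apply le_trans hb
    apply ENNReal.ofReal_le_ofReal
    have hhalf : (1:ℝ)/2 ≤ min τ 1 := le_min (by linarith) (by norm_num)
    have hpow : ((1:ℝ)/2)^(m+1) ≤ min τ 1 ^(m+1) := pow_le_pow_left₀ (by norm_num) hhalf _
    have hkey : (Ms+1) * 2^(m+1) * min τ 1 ^(m+1) ≥ Ms := by
      have h1 : (Ms+1) * 2^(m+1) * ((1:ℝ)/2)^(m+1) = Ms + 1 := by
        rw [mul_assoc, ← mul_pow]
        norm_num
      nlinarith [mul_le_mul_of_nonneg_left hpow (show (0:ℝ) ≤ (Ms+1) * 2^(m+1) by positivity)]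
    have h5 : (0:ℝ) ≤ (3*(m+2:ℝ)^2)^(m+1) * 2^(m+1) * min τ 1 ^(m+1) := by positivity
    rw [hCdef]
    nlinarith

lemma ball_two_sided (m : ℕ) : ∃ c C : ℝ, 0 < c ∧ 0 < C ∧
    ∀ τ : ℝ, 0 < τ → ∀ x ω : En (m+2), ‖ω‖ = 1 →
      ENNReal.ofReal (c * hfun m τ) ≤ μSp (m+2) (Ball (m+2) x ω τ) ∧
      μSp (m+2) (Ball (m+2) x ω τ) ≤ ENNReal.ofReal (C * hfun m τ) := by
  obtain ⟨Cc, hCc0, hCc⟩ := capSet_meas_upper m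
  set n : ℝ := (m+2:ℝ) with hn
  have hnpos : (0:ℝ) < n := by positivity
  have hsn : (0:ℝ) < Real.sqrt n := Real.sqrt_pos.mpr hnpos
  set cc : ℝ := (1/Real.sqrt n)^(m+1) with hccdef
  have hcc0 : 0 < cc := by positivity
  -- lower constant
  set clow : ℝ := (1/4) * cc * ((1:ℝ)/2)^(m+1) * cc * ((1:ℝ)/2)^(m+1) with hclowdef
  have hclow0 : 0 < clow := by positivity
  set Chigh : ℝ := 2 * 2^(m+1) * Cc with hChighdef
  have hChigh0 : 0 < Chigh := by positivity
  refine ⟨clow, Chigh, hclow0, hChigh0, ?_⟩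
  intro τ hτ x ω hω
  rw [μSp_ball_translate m x ω τ, μSp_ball_rotate m ω hω τ]
  constructor
  · -- lower bound
    have hτ2 : 0 < τ/2 := by linarith
    have hslab := volume_slab_ge m hτ2
    have hcap := capSet_meas_lower m (τ/2) hτ2
    have hge := μSp_ball_ge_prod m hτ
    have hstep : ENNReal.ofReal (min ((τ/2)^2) (τ/2)) * ENNReal.ofReal ((τ/2)/Real.sqrt n)^(m+1)
          * ENNReal.ofReal (cc * min (τ/2) 1 ^(m+1))
        ≤ μSp (m+2) (Ball (m+2) 0 (e1' m) τ) := by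
      calc ENNReal.ofReal (min ((τ/2)^2) (τ/2)) * ENNReal.ofReal ((τ/2)/Real.sqrt n)^(m+1)
            * ENNReal.ofReal (cc * min (τ/2) 1 ^(m+1))
          ≤ volume (slab m (τ/2)) * μSph (m+2) (capSet m (τ/2)) :=
            mul_le_mul' hslab hcap
        _ ≤ _ := hge
    apply le_trans _ hstep
    rw [← ENNReal.ofReal_pow (by positivity), ← ENNReal.ofReal_mul (by positivity),
      ← ENNReal.ofReal_mul (by positivity)]
    apply ENNReal.ofReal_le_ofReal
    -- real inequality
    have h1 : min (τ^2) τ / 4 ≤ min ((τ/2)^2) (τ/2) := by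
      rcases le_total (τ^2) τ with h | h
      · rw [min_eq_left h]
        apply le_min
        · nlinarith
        · nlinarith
      · rw [min_eq_right h]
        apply le_min
        · nlinarith [min_le_right (τ^2) τ, min_le_left (τ^2) τ]
        · nlinarith
    have hbase : (τ/2)/Real.sqrt n = 1/Real.sqrt n * ((1:ℝ)/2) * τ := by
      field_simp
    have h2 : ((τ/2)/Real.sqrt n)^(m+1) = cc * ((1:ℝ)/2)^(m+1) * τ^(m+1) := by
      rw [hccdef, ← mul_pow, ← mul_pow, hbase]
    have h3 : min τ 1 / 2 ≤ min (τ/2) 1 := by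
      rcases le_total τ 1 with h | h
      · rw [min_eq_left h, min_eq_left (by linarith)]
      · rw [min_eq_right h]
        apply le_min <;> [linarith; norm_num]
    have h4 : (min τ 1)^(m+1) * ((1:ℝ)/2)^(m+1) ≤ min (τ/2) 1 ^(m+1) := by
      rw [← mul_pow]
      apply pow_le_pow_left₀ (by positivity) _ (m+1)
      calc min τ 1 * ((1:ℝ)/2) = min τ 1 / 2 := by ring
        _ ≤ _ := h3
    have hmin1 : 0 < min (τ^2) τ := lt_min (by positivity) hτ
    have hmin2 : 0 < min τ 1 := lt_min hτ one_pos
    rw [h2]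
    unfold hfun
    rw [hclowdef]
    calc 1/4 * cc * ((1:ℝ)/2)^(m+1) * cc * ((1:ℝ)/2)^(m+1) * (min (τ^2) τ * τ^(m+1) * min τ 1 ^(m+1))
        = (min (τ^2) τ / 4) * (cc * ((1:ℝ)/2)^(m+1) * τ^(m+1)) *
            (cc * ((min τ 1)^(m+1) * ((1:ℝ)/2)^(m+1))) := by ring
      _ ≤ min ((τ/2)^2) (τ/2) * (cc * ((1:ℝ)/2)^(m+1) * τ^(m+1)) *
            (cc * min (τ/2) 1 ^(m+1)) := by
          apply mul_le_mul
          · apply mul_le_mul_of_nonneg_right h1 (by positivity)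
          · exact mul_le_mul_of_nonneg_left h4 (le_of_lt hcc0)
          · positivity
          · positivity
  · -- upper bound
    have hslab := volume_slab_le m hτ
    have hcap := hCc τ hτ
    have hle := μSp_ball_le_prod m hτ
    apply le_trans hle
    calc volume (slab m τ) * μSph (m+2) (capSet m τ)
        ≤ (ENNReal.ofReal (2 * min (τ^2) τ) * ENNReal.ofReal (2*τ)^(m+1)) *
            ENNReal.ofReal (Cc * min τ 1 ^(m+1)) := mul_le_mul' hslab hcap
      _ = ENNReal.ofReal ((2 * min (τ^2) τ) * (2*τ)^(m+1) * (Cc * min τ 1 ^(m+1))) := by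
          rw [← ENNReal.ofReal_pow (by positivity), ← ENNReal.ofReal_mul (by positivity),
            ← ENNReal.ofReal_mul (by positivity)]
      _ ≤ ENNReal.ofReal (Chigh * hfun m τ) := by
          apply ENNReal.ofReal_le_ofReal
          unfold hfun
          rw [hChighdef]
          have he : (2*τ)^(m+1) = 2^(m+1) * τ^(m+1) := mul_pow _ _ _
          rw [he]
          ring_nf
          apply le_of_eq
          ring

lemma hfun_doubling_ge (m : ℕ) {lam τ : ℝ} (hlam : 1 ≤ lam) (hτ : 0 < τ) :
    lam^(m+2) * hfun m τ ≤ hfun m (lam*τ) := by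
  have hlam0 : (0:ℝ) < lam := by linarith
  have p1 : lam * min (τ^2) τ ≤ min ((lam*τ)^2) (lam*τ) := by
    apply le_min
    · have h1 : min (τ^2) τ ≤ τ^2 := min_le_left _ _
      nlinarith [mul_nonneg (mul_nonneg hlam0.le (by linarith : (0:ℝ) ≤ lam - 1)) (sq_nonneg τ),
        mul_le_mul_of_nonneg_left h1 hlam0.le]
    · have h1 : min (τ^2) τ ≤ τ := min_le_right _ _
      nlinarith
  have p3 : min τ 1 ^ (m+1) ≤ min (lam*τ) 1 ^ (m+1) := by
    apply pow_le_pow_left₀ (le_min (le_of_lt hτ) zero_le_one)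
    apply le_min
    · calc min τ 1 ≤ τ := min_le_left _ _
        _ ≤ lam*τ := by nlinarith
    · exact min_le_right _ _
  have hmin1 : (0:ℝ) ≤ min (τ^2) τ := le_min (by positivity) (le_of_lt hτ)
  have hmin2 : (0:ℝ) ≤ min τ 1 := le_min (le_of_lt hτ) zero_le_one
  calc lam^(m+2) * hfun m τ
      = (lam * min (τ^2) τ) * (lam^(m+1) * τ^(m+1)) * (min τ 1 ^(m+1)) := by
        unfold hfun; ring
    _ ≤ (min ((lam*τ)^2) (lam*τ)) * (lam^(m+1) * τ^(m+1)) * (min (lam*τ) 1 ^(m+1)) := by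
        apply mul_le_mul
        · exact mul_le_mul_of_nonneg_right p1 (by positivity)
        · exact p3
        · positivity
        · have : (0:ℝ) ≤ min ((lam*τ)^2) (lam*τ) := le_min (by positivity) (by positivity)
          positivity
    _ = hfun m (lam*τ) := by
        unfold hfun
        simp only [mul_pow]

lemma hfun_doubling_le (m : ℕ) {lam τ : ℝ} (hlam : 1 ≤ lam) (hτ : 0 < τ) :
    hfun m (lam*τ) ≤ lam^(2*(m+2)) * hfun m τ := by
  have hlam0 : (0:ℝ) < lam := by linarith
  have q1 : min ((lam*τ)^2) (lam*τ) ≤ lam^2 * min (τ^2) τ := by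
    rcases le_total (τ^2) τ with h | h
    · rw [min_eq_left h]
      calc min ((lam*τ)^2) (lam*τ) ≤ (lam*τ)^2 := min_le_left _ _
        _ = lam^2 * τ^2 := by ring
    · rw [min_eq_right h]
      calc min ((lam*τ)^2) (lam*τ) ≤ lam*τ := min_le_right _ _
        _ ≤ lam^2 * τ := by
          nlinarith [mul_nonneg (mul_nonneg hlam0.le (by linarith : (0:ℝ) ≤ lam - 1)) hτ.le]
  have q3 : min (lam*τ) 1 ≤ lam * min τ 1 := by
    rcases le_total τ 1 with h | h
    · rw [min_eq_left h]
      exact min_le_left _ _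
    · rw [min_eq_right h, mul_one]
      exact le_trans (min_le_right _ _) hlam
  have q3' : min (lam*τ) 1 ^(m+1) ≤ lam^(m+1) * min τ 1 ^(m+1) := by
    rw [← mul_pow]
    apply pow_le_pow_left₀ (le_min (by positivity) zero_le_one) q3
  have hmin2 : (0:ℝ) ≤ min τ 1 := le_min (le_of_lt hτ) zero_le_one
  calc hfun m (lam*τ)
      = (min ((lam*τ)^2) (lam*τ)) * (lam^(m+1) * τ^(m+1)) * (min (lam*τ) 1 ^(m+1)) := by
        unfold hfun
        simp only [mul_pow]
    _ ≤ (lam^2 * min (τ^2) τ) * (lam^(m+1) * τ^(m+1)) * (lam^(m+1) * min τ 1 ^(m+1)) := by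
        apply mul_le_mul
        · apply mul_le_mul_of_nonneg_right q1 (by positivity)
        · exact q3'
        · exact pow_nonneg (le_min (by positivity) zero_le_one) _
        · have h0 : (0:ℝ) ≤ min (τ^2) τ := le_min (by positivity) (le_of_lt hτ)
          positivity
    _ = lam^(2*(m+2)) * hfun m τ := by
        unfold hfun
        ring

lemma hfun_small (m : ℕ) {τ : ℝ} (hτ0 : 0 < τ) (hτ1 : τ ≤ 1) :
    hfun m τ = τ^(2*(m+2)) := by
  unfold hfun
  rw [min_eq_left (by nlinarith), min_eq_left hτ1]
  ring

lemma hfun_large (m : ℕ) {τ : ℝ} (hτ1 : 1 ≤ τ) :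
    hfun m τ = τ^(m+2) := by
  unfold hfun
  rw [min_eq_right (by nlinarith), min_eq_right hτ1]
  ring


/-- volume and doubling estimates for the anisotropic balls `B_τ(x,ω)` on the
cosphere bundle. -/
theorem ball_volume_doubling (n : ℕ) (hn : 2 ≤ n) :
    ∃ C : ℝ, 0 < C ∧
      (∀ lam : ℝ, 1 ≤ lam → ∀ τ : ℝ, 0 < τ → ∀ x ω : En n, ‖ω‖ = 1 →
        (1 / C) * lam ^ (n : ℝ) * (μSp n (Ball n x ω τ)).toReal ≤
            (μSp n (Ball n x ω (lam * τ))).toReal ∧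
          (μSp n (Ball n x ω (lam * τ))).toReal ≤
            C * lam ^ (2 * (n : ℝ)) * (μSp n (Ball n x ω τ)).toReal) ∧
      (∀ τ : ℝ, 0 < τ → τ ≤ 1 → ∀ x ω : En n, ‖ω‖ = 1 →
        (1 / C) * τ ^ (2 * (n : ℝ)) ≤ (μSp n (Ball n x ω τ)).toReal ∧
          (μSp n (Ball n x ω τ)).toReal ≤ C * τ ^ (2 * (n : ℝ))) ∧
      (∀ τ : ℝ, 1 ≤ τ → ∀ x ω : En n, ‖ω‖ = 1 →
        (1 / C) * τ ^ (n : ℝ) ≤ (μSp n (Ball n x ω τ)).toReal ∧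
          (μSp n (Ball n x ω τ)).toReal ≤ C * τ ^ (n : ℝ)) := by
  obtain ⟨m, rfl⟩ : ∃ m, n = m + 2 := ⟨n - 2, by omega⟩
  obtain ⟨c, C, hc0, hC0, hb⟩ := ball_two_sided m
  set Cf : ℝ := max (C/c) (max C c⁻¹) with hCf
  have hCf0 : 0 < Cf := lt_of_lt_of_le hC0 (le_trans (le_max_left _ _) (le_max_right _ _))
  have hCfC : C ≤ Cf := le_trans (le_max_left _ _) (le_max_right _ _)
  have hCfc : 1/Cf ≤ c := by
    have h1 : c⁻¹ ≤ Cf := le_trans (le_max_right _ _) (le_max_right _ _)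
    calc 1/Cf ≤ 1/(c⁻¹) := one_div_le_one_div_of_le (by positivity) h1
      _ = c := by rw [one_div, inv_inv]
  have hCfr : (1/Cf) * C ≤ c := by
    have h1 : C/c ≤ Cf := le_max_left _ _
    have h2 : 1/Cf ≤ 1/(C/c) := one_div_le_one_div_of_le (by positivity) h1
    have h3 : 1/(C/c) = c/C := by field_simp
    rw [h3] at h2
    calc (1/Cf) * C ≤ (c/C) * C := mul_le_mul_of_nonneg_right h2 hC0.le
      _ = c := by field_simp
  -- real-valued bounds
  have hreal : ∀ τ : ℝ, 0 < τ → ∀ x ω : En (m+2), ‖ω‖ = 1 →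
      c * hfun m τ ≤ (μSp (m+2) (Ball (m+2) x ω τ)).toReal ∧
      (μSp (m+2) (Ball (m+2) x ω τ)).toReal ≤ C * hfun m τ := by
    intro τ hτ x ω hω
    obtain ⟨hlo, hhi⟩ := hb τ hτ x ω hω
    have hfin : μSp (m+2) (Ball (m+2) x ω τ) ≠ ∞ :=
      (lt_of_le_of_lt hhi ENNReal.ofReal_lt_top).ne
    constructor
    · exact (ENNReal.ofReal_le_iff_le_toReal hfin).mp hlo
    · exact ENNReal.toReal_le_of_le_ofReal
        (mul_nonneg hC0.le (hfun_pos m hτ).le) hhi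
  have hfnonneg : ∀ τ : ℝ, ∀ x ω : En (m+2),
      0 ≤ (μSp (m+2) (Ball (m+2) x ω τ)).toReal := fun _ _ _ => ENNReal.toReal_nonneg
  refine ⟨Cf, hCf0, ?_, ?_, ?_⟩
  · -- doubling
    intro lam hlam τ hτ x ω hω
    have hlam0 : (0:ℝ) < lam := by linarith
    have hlτ : 0 < lam * τ := by positivity
    obtain ⟨hlo1, hhi1⟩ := hreal τ hτ x ω hω
    obtain ⟨hlo2, hhi2⟩ := hreal (lam*τ) hlτ x ω hω
    have hrn : lam ^ ((m+2:ℕ) : ℝ) = lam^(m+2) := Real.rpow_natCast lam (m+2)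
    have hrn2 : lam ^ (2 * ((m+2:ℕ) : ℝ)) = lam^(2*(m+2)) := by
      rw [show (2 * ((m+2:ℕ):ℝ)) = ((2*(m+2) : ℕ) : ℝ) by push_cast; ring]
      exact Real.rpow_natCast lam (2*(m+2))
    have hL0 : (0:ℝ) ≤ lam^(m+2) := by positivity
    have hL20 : (0:ℝ) ≤ lam^(2*(m+2)) := by positivity
    have hkey1 := hfun_doubling_ge m hlam hτ
    have hkey2 := hfun_doubling_le m hlam hτ
    constructor
    · rw [hrn]
      calc (1/Cf) * lam^(m+2) * (μSp (m+2) (Ball (m+2) x ω τ)).toReal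
          ≤ (1/Cf) * lam^(m+2) * (C * hfun m τ) := by
            apply mul_le_mul_of_nonneg_left hhi1 (by positivity)
        _ = ((1/Cf) * C) * (lam^(m+2) * hfun m τ) := by ring
        _ ≤ c * (lam^(m+2) * hfun m τ) := by
            apply mul_le_mul_of_nonneg_right hCfr
            exact mul_nonneg hL0 (hfun_pos m hτ).le
        _ ≤ c * hfun m (lam*τ) := mul_le_mul_of_nonneg_left hkey1 hc0.le
        _ ≤ _ := hlo2
    · rw [hrn2]
      calc (μSp (m+2) (Ball (m+2) x ω (lam*τ))).toReal
          ≤ C * hfun m (lam*τ) := hhi2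
        _ ≤ C * (lam^(2*(m+2)) * hfun m τ) := mul_le_mul_of_nonneg_left hkey2 hC0.le
        _ ≤ C * (lam^(2*(m+2)) * ((μSp (m+2) (Ball (m+2) x ω τ)).toReal / c)) := by
            apply mul_le_mul_of_nonneg_left _ hC0.le
            apply mul_le_mul_of_nonneg_left _ hL20
            rw [le_div_iff₀ hc0]
            linarith [hlo1]
        _ = (C/c) * lam^(2*(m+2)) * (μSp (m+2) (Ball (m+2) x ω τ)).toReal := by ring
        _ ≤ Cf * lam^(2*(m+2)) * (μSp (m+2) (Ball (m+2) x ω τ)).toReal := by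
            apply mul_le_mul_of_nonneg_right _ (hfnonneg _ _ _)
            exact mul_le_mul_of_nonneg_right (le_max_left _ _) hL20
  · -- small τ
    intro τ hτ hτ1 x ω hω
    obtain ⟨hlo, hhi⟩ := hreal τ hτ x ω hω
    rw [hfun_small m hτ hτ1] at hlo hhi
    have hrn2 : τ ^ (2 * ((m+2:ℕ) : ℝ)) = τ^(2*(m+2)) := by
      rw [show (2 * ((m+2:ℕ):ℝ)) = ((2*(m+2) : ℕ) : ℝ) by push_cast; ring]
      exact Real.rpow_natCast τ (2*(m+2))
    rw [hrn2]
    have hp0 : (0:ℝ) ≤ τ^(2*(m+2)) := by positivity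
    constructor
    · calc (1/Cf) * τ^(2*(m+2)) ≤ c * τ^(2*(m+2)) :=
            mul_le_mul_of_nonneg_right hCfc hp0
        _ ≤ _ := hlo
    · calc (μSp (m+2) (Ball (m+2) x ω τ)).toReal ≤ C * τ^(2*(m+2)) := hhi
        _ ≤ Cf * τ^(2*(m+2)) := mul_le_mul_of_nonneg_right hCfC hp0
  · -- large τ
    intro τ hτ1 x ω hω
    have hτ : (0:ℝ) < τ := by linarith
    obtain ⟨hlo, hhi⟩ := hreal τ hτ x ω hω
    rw [hfun_large m hτ1] at hlo hhi
    have hrn : τ ^ ((m+2:ℕ) : ℝ) = τ^(m+2) := Real.rpow_natCast τ (m+2)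
    rw [hrn]
    have hp0 : (0:ℝ) ≤ τ^(m+2) := by positivity
    constructor
    · calc (1/Cf) * τ^(m+2) ≤ c * τ^(m+2) := mul_le_mul_of_nonneg_right hCfc hp0
        _ ≤ _ := hlo
    · calc (μSp (m+2) (Ball (m+2) x ω τ)).toReal ≤ C * τ^(m+2) := hhi
        _ ≤ Cf * τ^(m+2) := mul_le_mul_of_nonneg_right hCfC hp0

end
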